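/- arXiv:2309.02200 — 2 statements merged into one kernel-verified Lean document; each statement's English description precedes it below -/
import Mathlib

section
/- (Greedy set cover bound.) Let U be a finite set, let 𝒞 be a family of subsets of U, let d ≥ 1, and assume every member of 𝒞 has cardinality at most d. Suppose S₁, …, S_k ∈ 𝒞 is a greedy sequence: for each i, the set of newly covered elements S_i \ (S₁ ∪ ⋯ ∪ S_{i−1}) is nonempty and has cardinality at least |T \ (S₁ ∪ ⋯ ∪ S_{i−1})| for every T ∈ 𝒞; and suppose S₁ ∪ ⋯ ∪ S_k = U. If there exist t sets in 𝒞 whose union is U, then k ≤ t · H(d), where H(d) = 1 + 1/2 + ⋯ + 1/d is the d-th harmonic number. -/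
lemma gsc_tele (r : ℕ → ℕ) (f : ℕ → ℝ) :
    ∀ k : ℕ, (∀ i < k, r (i+1) ≤ r i) →
    ∑ i ∈ Finset.range k, ∑ j ∈ Finset.Ioc (r (i+1)) (r i), f j
      = ∑ j ∈ Finset.Ioc (r k) (r 0), f j := by
  intro k
  induction k with
  | zero => simp
  | succ m ih =>
    intro h
    have hr0 : r m ≤ r 0 := by
      clear ih
      induction m with
      | zero => exact le_refl _
      | succ p ihp =>
        exact le_trans (h p (by omega)) (ihp (fun i hi => h i (by omega)))
    rw [Finset.sum_range_succ, ih (fun i hi => h i (by omega)), add_comm,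
      Finset.sum_Ioc_consecutive f (h m (by omega)) hr0]

lemma gsc_step (s r m : ℕ) (hsr : s ≤ r) (hrm : r ≤ m) :
    ((r - s : ℕ) : ℝ) / m ≤ ∑ j ∈ Finset.Ioc s r, (1:ℝ)/j := by
  rcases Nat.eq_zero_or_pos m with hm | hm
  · have h0 : r = 0 := by omega
    have h1 : s = 0 := by omega
    simp [h0, h1, hm]
  · have e1 : ((r - s : ℕ) : ℝ) / m = ∑ _j ∈ Finset.Ioc s r, (1:ℝ)/m := by
      rw [Finset.sum_const, Nat.card_Ioc, nsmul_eq_mul]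
      ring
    rw [e1]
    refine Finset.sum_le_sum fun j hj => ?_
    rw [Finset.mem_Ioc] at hj
    apply one_div_le_one_div_of_le
    · exact_mod_cast Nat.lt_of_le_of_lt (Nat.zero_le s) hj.1
    · exact_mod_cast le_trans hj.2 hrm

lemma gsc_biUnion_sum_le {α β : Type*} [DecidableEq α] [DecidableEq β]
    (F : Finset β) (g : β → Finset α)
    (c : α → ℝ) (hc : ∀ x, 0 ≤ c x) :
    ∑ x ∈ F.biUnion g, c x ≤ ∑ T ∈ F, ∑ x ∈ g T, c x := by
  induction F using Finset.induction with
  | empty => simp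
  | @insert A F' hA ih =>
    rw [Finset.biUnion_insert, Finset.sum_insert hA]
    have key : ∑ x ∈ g A ∪ F'.biUnion g, c x ≤ ∑ x ∈ g A, c x + ∑ x ∈ F'.biUnion g, c x := by
      have h2 := Finset.sum_union_inter (s₁ := g A) (s₂ := F'.biUnion g) (f := c)
      have h3 : 0 ≤ ∑ x ∈ g A ∩ F'.biUnion g, c x := Finset.sum_nonneg fun x _ => hc x
      linarith
    linarith [ih]




/-- Greedy set cover bound: if every member of the family `C` has cardinality at
most `d`, the sequence `S 0, …, S (k-1)` is greedy (each step covers a nonempty set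
of new elements that is at least as large as the set of new elements any member of
`C` would cover) and covers `U`, and some `t` sets of `C` cover `U`, then
`k ≤ t * H d`, where `H d = ∑_{i=1}^{d} 1/i` is the `d`-th harmonic number. -/
theorem greedy_set_cover_bound {α : Type*} [DecidableEq α]
    (U : Finset α) (C : Set (Finset α)) (hsub : ∀ T ∈ C, T ⊆ U)
    (d : ℕ) (hd : 1 ≤ d) (hsize : ∀ T ∈ C, T.card ≤ d)
    (k : ℕ) (S : ℕ → Finset α)
    (hmem : ∀ i < k, S i ∈ C)
    (hgreedy : ∀ i < k,
      (S i \ (Finset.range i).biUnion S).Nonempty ∧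
      ∀ T ∈ C, (T \ (Finset.range i).biUnion S).card ≤
        (S i \ (Finset.range i).biUnion S).card)
    (hcover : (Finset.range k).biUnion S = U)
    (t : ℕ) (F : Finset (Finset α)) (hFC : ↑F ⊆ C) (hFt : F.card = t)
    (hFcover : F.biUnion id = U) :
    (k : ℝ) ≤ (t : ℝ) * ∑ i ∈ Finset.Icc 1 d, (1 : ℝ) / i := by
  classical
  set cov : ℕ → Finset α := fun i => (Finset.range i).biUnion S with hcovdef
  set nw : ℕ → Finset α := fun i => S i \ cov i with hnwdef
  set n : ℕ → ℕ := fun i => (nw i).card with hndef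
  have hnpos : ∀ i < k, 0 < n i := fun i hi => Finset.card_pos.2 (hgreedy i hi).1
  set c : α → ℝ := fun x => ∑ i ∈ Finset.range k, if x ∈ nw i then 1/(n i : ℝ) else 0
    with hcdef
  have hc0 : ∀ x, 0 ≤ c x := by
    intro x
    apply Finset.sum_nonneg
    intro i _
    split <;> positivity
  have fact1 : ∀ A : Finset α,
      ∑ x ∈ A, c x = ∑ i ∈ Finset.range k, ((A ∩ nw i).card : ℝ) / n i := by
    intro A
    rw [hcdef, Finset.sum_comm]
    refine Finset.sum_congr rfl fun i _ => ?_
    rw [Finset.sum_ite_mem, Finset.sum_const, nsmul_eq_mul, mul_one_div]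
  have covmono : ∀ i j, i ≤ j → cov i ⊆ cov j := by
    intro i j hij
    exact Finset.biUnion_subset_biUnion_of_subset_left S
      (Finset.range_subset_range.2 hij)
  have covsucc : ∀ i, cov (i+1) = S i ∪ cov i := by
    intro i
    rw [hcovdef]
    simp [Finset.range_add_one, Finset.biUnion_insert]
  -- the total charge over U equals k
  have fact3 : ∑ x ∈ U, c x = (k : ℝ) := by
    rw [fact1 U]
    have : ∀ i ∈ Finset.range k, ((U ∩ nw i).card : ℝ) / n i = 1 := by
      intro i hi
      rw [Finset.mem_range] at hi
      have hUi : U ∩ nw i = nw i := by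
        apply Finset.inter_eq_right.2
        exact (Finset.sdiff_subset).trans (hsub (S i) (hmem i hi))
      rw [hUi]
      exact div_self (by exact_mod_cast (hnpos i hi).ne')
    rw [Finset.sum_congr rfl this]
    simp
  -- per-set charge bound
  have fact4 : ∀ T ∈ C, ∑ x ∈ T, c x ≤ ∑ j ∈ Finset.Icc 1 d, (1:ℝ)/j := by
    intro T hT
    set r : ℕ → ℕ := fun i => (T \ cov i).card with hrdef
    have hmono : ∀ i, r (i+1) ≤ r i := by
      intro i
      exact Finset.card_le_card
        (Finset.sdiff_subset_sdiff (Finset.Subset.refl T) (covmono i (i+1) (by omega)))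
    have hsplit : ∀ i, T ∩ nw i = (T \ cov i) \ (T \ cov (i+1)) := by
      intro i
      ext x
      have hx : x ∈ cov (i+1) ↔ x ∈ S i ∨ x ∈ cov i := by
        rw [covsucc i]; simp
      simp only [Finset.mem_inter, Finset.mem_sdiff, hnwdef, hx]
      tauto
    have hcard : ∀ i, ((T ∩ nw i).card : ℕ) = r i - r (i+1) := by
      intro i
      rw [hsplit i, Finset.card_sdiff_of_subset
        (Finset.sdiff_subset_sdiff (Finset.Subset.refl T) (covmono i (i+1) (by omega)))]
    have hbound : ∀ i ∈ Finset.range k,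
        ((T ∩ nw i).card : ℝ) / n i ≤ ∑ j ∈ Finset.Ioc (r (i+1)) (r i), (1:ℝ)/j := by
      intro i hi
      rw [Finset.mem_range] at hi
      rw [hcard i]
      exact gsc_step (r (i+1)) (r i) (n i) (hmono i) ((hgreedy i hi).2 T hT)
    calc ∑ x ∈ T, c x = ∑ i ∈ Finset.range k, ((T ∩ nw i).card : ℝ) / n i := fact1 T
      _ ≤ ∑ i ∈ Finset.range k, ∑ j ∈ Finset.Ioc (r (i+1)) (r i), (1:ℝ)/j :=
          Finset.sum_le_sum hbound
      _ = ∑ j ∈ Finset.Ioc (r k) (r 0), (1:ℝ)/j :=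
          gsc_tele r (fun j => (1:ℝ)/j) k (fun i _ => hmono i)
      _ ≤ ∑ j ∈ Finset.Icc 1 d, (1:ℝ)/j := by
          apply Finset.sum_le_sum_of_subset_of_nonneg
          · intro j hj
            rw [Finset.mem_Ioc] at hj
            rw [Finset.mem_Icc]
            constructor
            · omega
            · have hr0 : r 0 ≤ d := by
                have : r 0 = T.card := by
                  rw [hrdef]
                  simp [hcovdef]
                rw [this]
                exact hsize T hT
              omega
          · intro j _ _
            positivity
  -- conclude
  calc (k : ℝ) = ∑ x ∈ U, c x := fact3.symm
    _ ≤ ∑ T ∈ F, ∑ x ∈ T, c x := by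
        rw [← hFcover]
        exact gsc_biUnion_sum_le F id c hc0
    _ ≤ ∑ T ∈ F, ∑ j ∈ Finset.Icc 1 d, (1:ℝ)/j :=
        Finset.sum_le_sum fun T hT => fact4 T (hFC hT)
    _ = (t : ℝ) * ∑ i ∈ Finset.Icc 1 d, (1:ℝ)/i := by
        rw [Finset.sum_const, hFt, nsmul_eq_mul]
end

section
/- (Greedy dominating set approximation.) Let G be a finite simple graph on vertex set V with maximum degree Δ, and let N[v] denote the closed neighborhood of v (v together with its neighbors). Suppose v₁, …, v_k is a sequence of vertices such that, setting W₀ = V and W_i = W_{i−1} \ N[v_i], for each i the span |N[v_i] ∩ W_{i−1}| is positive and is at least |N[u] ∩ W_{i−1}| for every vertex u ∈ V, and suppose W_k = ∅. Then {v₁, …, v_k} is a dominating set of G and k ≤ γ(G) · H(Δ + 1), where γ(G) is the domination number of G and H(d) = ∑_{i=1}^{d} 1/i is the d-th harmonic number; in particular k ≤ γ(G) · (1 + ln(Δ + 1)). -/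
/-!
The greedy algorithm is charged to an optimal cover. When a greedy step covers `s` new
vertices, each of them is charged `1 / s`, so the total charge is the number of steps. Take a
dominating set `D` and `u ∈ D`: as long as `a` vertices of `N[u]` are uncovered, the greedy
choice covers at least `a` vertices, so every vertex of `N[u]` covered at that moment is charged
at most `1 / a`. Hence `N[u]` is charged at most `H(|N[u]|) ≤ H(Δ + 1)` in total, and since the
sets `N[u]`, `u ∈ D`, cover every vertex, the number of steps is at most `|D| · H(Δ + 1)`.
-/

open Finset

lemma sum_Icc_one_div_eq_harmonic (n : ℕ) :
    ∑ i ∈ Icc 1 n, (1 : ℝ) / i = harmonic n := by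
  simp [harmonic_eq_sum_Icc, one_div]

lemma harmonic_mono : Monotone harmonic := fun _ _ h =>
  sum_le_sum_of_subset_of_nonneg (range_subset_range.2 h) fun _ _ _ => by positivity

lemma sub_div_le_harmonic_sub_harmonic {a b s : ℕ} (hba : b ≤ a) (has : a ≤ s) :
    ((a : ℚ) - b) / s ≤ harmonic a - harmonic b := by
  rw [harmonic, harmonic, ← sum_Ico_eq_sub _ hba]
  calc ((a : ℚ) - b) / s = #(Ico b a) • (s : ℚ)⁻¹ := by
        rw [Nat.card_Ico, nsmul_eq_mul, Nat.cast_sub hba, div_eq_mul_inv]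
    _ ≤ ∑ i ∈ Ico b a, ((i + 1 : ℕ) : ℚ)⁻¹ := by
        refine card_nsmul_le_sum _ _ _ fun i hi => inv_anti₀ (by positivity) ?_
        exact_mod_cast (mem_Ico.1 hi).2.trans_le has

lemma sum_range_sub_div_le_harmonic_sub {k : ℕ} {a s : ℕ → ℕ}
    (ha : ∀ i < k, a (i + 1) ≤ a i) (has : ∀ i < k, a i ≤ s i) :
    ∑ i ∈ range k, ((a i : ℚ) - a (i + 1)) / s i ≤ harmonic (a 0) - harmonic (a k) :=
  calc ∑ i ∈ range k, ((a i : ℚ) - a (i + 1)) / s i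
      ≤ ∑ i ∈ range k, (harmonic (a i) - harmonic (a (i + 1))) :=
        sum_le_sum fun i hi =>
          sub_div_le_harmonic_sub_harmonic (ha i (mem_range.1 hi)) (has i (mem_range.1 hi))
    _ = harmonic (a 0) - harmonic (a k) := sum_range_sub' _ _

/-- A run of the greedy set-cover algorithm for the sets `S u`: `W i` is the set of elements
still uncovered before step `i`, and `v i` is chosen with maximal positive span. -/
structure IsGreedyRun {α ι : Type*} [DecidableEq α] (S : ι → Finset α) (k : ℕ) (v : ℕ → ι)
    (W : ℕ → Finset α) : Prop where
  step : ∀ i < k, W (i + 1) = W i \ S (v i)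
  span_pos : ∀ i < k, 0 < #(S (v i) ∩ W i)
  span_max : ∀ i < k, ∀ u, #(S u ∩ W i) ≤ #(S (v i) ∩ W i)
  exhausted : W k = ∅

namespace IsGreedyRun

variable {α ι : Type*} [DecidableEq α] {S : ι → Finset α} {k : ℕ} {v : ℕ → ι}
  {W : ℕ → Finset α}

lemma succ_subset (hrun : IsGreedyRun S k v W) {i : ℕ} (hi : i < k) : W (i + 1) ⊆ W i := by
  rw [hrun.step i hi]
  exact sdiff_subset

lemma subset_zero (hrun : IsGreedyRun S k v W) {i : ℕ} (hi : i ≤ k) : W i ⊆ W 0 := by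
  induction i with
  | zero => exact Subset.rfl
  | succ i ih => exact (hrun.succ_subset hi).trans (ih (by omega))

lemma exists_mem_of_mem_zero (hrun : IsGreedyRun S k v W) {x : α} (hx : x ∈ W 0) :
    ∃ i < k, x ∈ S (v i) := by
  by_contra! hnot
  have hmem : ∀ i ≤ k, x ∈ W i := by
    intro i hi
    induction i with
    | zero => exact hx
    | succ i ih =>
      rw [hrun.step i hi]
      exact mem_sdiff.2 ⟨ih (by omega), hnot i hi⟩
  simpa [hrun.exhausted] using hmem k le_rfl

lemma one_le_sum_charge (hrun : IsGreedyRun S k v W) {D : Finset ι}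
    (hD : ∀ x ∈ W 0, ∃ u ∈ D, x ∈ S u) {i : ℕ} (hi : i < k) :
    1 ≤ ∑ u ∈ D, (#(S u ∩ (W i \ W (i + 1))) : ℚ) / #(S (v i) ∩ W i) := by
  have hpos : (0 : ℚ) < #(S (v i) ∩ W i) := by exact_mod_cast hrun.span_pos i hi
  have hnew : W i \ W (i + 1) = S (v i) ∩ W i := by
    rw [hrun.step i hi, sdiff_sdiff_self_left, inter_comm]
  have hcover : W i \ W (i + 1) ⊆ D.biUnion fun u => S u ∩ (W i \ W (i + 1)) := by
    intro x hx
    obtain ⟨u, hu, hxu⟩ := hD x (hrun.subset_zero hi.le (sdiff_subset hx))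
    exact mem_biUnion.2 ⟨u, hu, mem_inter.2 ⟨hxu, hx⟩⟩
  have hcard : #(S (v i) ∩ W i) ≤ ∑ u ∈ D, #(S u ∩ (W i \ W (i + 1))) :=
    hnew ▸ (card_le_card hcover).trans card_biUnion_le
  rw [← sum_div, one_le_div hpos]
  exact_mod_cast hcard

lemma card_inter_sdiff_succ (hrun : IsGreedyRun S k v W) (u : ι) {i : ℕ} (hi : i < k) :
    (#(S u ∩ (W i \ W (i + 1))) : ℚ) = #(S u ∩ W i) - #(S u ∩ W (i + 1)) := by
  have h := card_sdiff_add_card_inter (S u ∩ W i) (W (i + 1))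
  rw [inter_assoc, inter_eq_right.2 (hrun.succ_subset hi), inter_sdiff_assoc] at h
  rw [eq_sub_iff_add_eq]
  exact_mod_cast h

lemma sum_charge_le_harmonic (hrun : IsGreedyRun S k v W) (u : ι) :
    ∑ i ∈ range k, (#(S u ∩ (W i \ W (i + 1))) : ℚ) / #(S (v i) ∩ W i) ≤
      harmonic #(S u ∩ W 0) := by
  rw [sum_congr rfl fun i hi => by rw [hrun.card_inter_sdiff_succ u (mem_range.1 hi)]]
  refine (sum_range_sub_div_le_harmonic_sub (a := fun i => #(S u ∩ W i))
    (fun i hi => card_le_card (inter_subset_inter_left (hrun.succ_subset hi)))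
    (fun i hi => hrun.span_max i hi u)).trans ?_
  simp [hrun.exhausted]

theorem card_le_sum_harmonic (hrun : IsGreedyRun S k v W) {D : Finset ι}
    (hD : ∀ x ∈ W 0, ∃ u ∈ D, x ∈ S u) :
    (k : ℚ) ≤ ∑ u ∈ D, harmonic #(S u ∩ W 0) :=
  calc (k : ℚ) = ∑ _i ∈ range k, 1 := by simp
    _ ≤ ∑ i ∈ range k, ∑ u ∈ D, (#(S u ∩ (W i \ W (i + 1))) : ℚ) / #(S (v i) ∩ W i) :=
        sum_le_sum fun i hi => hrun.one_le_sum_charge hD (mem_range.1 hi)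
    _ = ∑ u ∈ D, ∑ i ∈ range k, (#(S u ∩ (W i \ W (i + 1))) : ℚ) / #(S (v i) ∩ W i) :=
        sum_comm
    _ ≤ ∑ u ∈ D, harmonic #(S u ∩ W 0) :=
        sum_le_sum fun u _ => hrun.sum_charge_le_harmonic u

theorem card_le_card_mul_harmonic (hrun : IsGreedyRun S k v W) {D : Finset ι}
    (hD : ∀ x ∈ W 0, ∃ u ∈ D, x ∈ S u) {m : ℕ} (hm : ∀ u ∈ D, #(S u ∩ W 0) ≤ m) :
    (k : ℚ) ≤ #D * harmonic m :=
  calc (k : ℚ) ≤ ∑ u ∈ D, harmonic #(S u ∩ W 0) := hrun.card_le_sum_harmonic hD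
    _ ≤ ∑ _u ∈ D, harmonic m := sum_le_sum fun u hu => harmonic_mono (hm u hu)
    _ = #D * harmonic m := by rw [sum_const, nsmul_eq_mul]

end IsGreedyRun

namespace SimpleGraph

variable {V : Type*} [DecidableEq V] (G : SimpleGraph V) [Fintype V] [DecidableRel G.Adj]

lemma exists_mem_insert_neighborFinset {D : Finset V} (hD : ∀ x ∉ D, ∃ u ∈ D, G.Adj x u)
    (x : V) : ∃ u ∈ D, x ∈ insert u (G.neighborFinset u) := by
  by_cases hx : x ∈ D
  · exact ⟨x, hx, mem_insert_self x _⟩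
  · obtain ⟨u, hu, hxu⟩ := hD x hx
    exact ⟨u, hu, mem_insert_of_mem ((G.mem_neighborFinset u x).2 hxu.symm)⟩

lemma card_insert_neighborFinset_le (u : V) :
    #(insert u (G.neighborFinset u)) ≤ G.maxDegree + 1 :=
  (card_insert_le _ _).trans
    (Nat.add_le_add_right ((G.card_neighborFinset_eq_degree u).trans_le
      (G.degree_le_maxDegree u)) 1)

end SimpleGraph

/-- Greedy dominating set approximation: if `v 0, …, v (k-1)` is a greedy sequence
of vertices (each with positive span, maximal among the spans of all vertices,
where the span of `u` w.r.t. the current set `W i` of uncovered vertices is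
`|N[u] ∩ W i|`) which leaves no vertex uncovered, then `{v 0, …, v (k-1)}` is a
dominating set of `G` and `k ≤ γ(G) * H(Δ + 1) ≤ γ(G) * (1 + ln (Δ + 1))`,
where `γ(G)` is the domination number and `Δ` the maximum degree. -/
theorem greedy_dominating_set_approx {V : Type*} [Fintype V] [DecidableEq V]
    (G : SimpleGraph V) [DecidableRel G.Adj]
    (k : ℕ) (v : ℕ → V) (W : ℕ → Finset V)
    (hW0 : W 0 = Finset.univ)
    (hWstep : ∀ i < k, W (i + 1) = W i \ insert (v i) (G.neighborFinset (v i)))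
    (hspan : ∀ i < k,
      0 < ((insert (v i) (G.neighborFinset (v i))) ∩ W i).card ∧
      ∀ u : V, ((insert u (G.neighborFinset u)) ∩ W i).card ≤
        ((insert (v i) (G.neighborFinset (v i))) ∩ W i).card)
    (hend : W k = ∅)
    (gamma : ℕ)
    (hgamma : IsLeast
      {c : ℕ | ∃ D : Finset V, (∀ x ∉ D, ∃ u ∈ D, G.Adj x u) ∧ D.card = c} gamma) :
    (∀ x ∉ {u : V | ∃ i < k, v i = u}, ∃ w ∈ {u : V | ∃ i < k, v i = u}, G.Adj x w) ∧
    (k : ℝ) ≤ (gamma : ℝ) * ∑ i ∈ Finset.Icc 1 (G.maxDegree + 1), (1 : ℝ) / i ∧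
    (k : ℝ) ≤ (gamma : ℝ) * (1 + Real.log (G.maxDegree + 1)) := by
  have hrun : IsGreedyRun (fun u => insert u (G.neighborFinset u)) k v W :=
    ⟨hWstep, fun i hi => (hspan i hi).1, fun i hi => (hspan i hi).2, hend⟩
  obtain ⟨D, hD, rfl⟩ := hgamma.1
  have hbound : (k : ℝ) ≤ #D * harmonic (G.maxDegree + 1) := by
    exact_mod_cast hrun.card_le_card_mul_harmonic
      (fun x _ => G.exists_mem_insert_neighborFinset hD x)
      (fun u _ => (card_le_card inter_subset_left).trans (G.card_insert_neighborFinset_le u))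
  refine ⟨fun x hx => ?_, by rwa [sum_Icc_one_div_eq_harmonic], ?_⟩
  · obtain ⟨i, hi, hxi⟩ := hrun.exists_mem_of_mem_zero (hW0 ▸ mem_univ x)
    rcases mem_insert.1 hxi with rfl | hadj
    · exact absurd ⟨i, hi, rfl⟩ hx
    · exact ⟨v i, ⟨i, hi, rfl⟩, ((G.mem_neighborFinset _ _).1 hadj).symm⟩
  · refine hbound.trans (mul_le_mul_of_nonneg_left ?_ (Nat.cast_nonneg _))
    exact_mod_cast harmonic_le_one_add_log (G.maxDegree + 1)
end
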